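/- Let K : M_n(ℂ) → M_n(ℂ) be completely positive with Kraus representation K(A) = Σ_{j=1}^m K_j* A K_j where Σ_j K_j* K_j = I, and suppose σ is a positive definite density matrix with Σ_j K_j σ K_j* = σ. Define K̂_j = σ^{1/2} K_j* σ^{−1/2} and K̂(A) = Σ_j K̂_j* A K̂_j. Then: (i) Σ_j K̂_j* K̂_j = I; (ii) Σ_j K̂_j σ K̂_j* = σ; and (iii) Tr[σ^{1/2} (K̂(B))* σ^{1/2} A] = Tr[σ^{1/2} B* σ^{1/2} K(A)] for all A, B ∈ M_n(ℂ), i.e., K̂ is the adjoint of K with respect to the KMS inner product ⟨A,B⟩_{1/2} = Tr[σ^{1/2} A* σ^{1/2} B]. -/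

import Mathlib

/-!
Write `S = σ^{1/2}` and `T = σ^{-1/2}`: both are Hermitian, `S T = T S = 1` and `S S = σ`.
Then `K̂_j* K̂_j = T (K_j σ K_j*) T` and `K̂_j σ K̂_j* = S (K_j* K_j) S`, which turns
invariance of `σ` into unitality of `K̂` and conversely. For the KMS adjointness,
`S (K̂_j* B K̂_j)* S = K_j S B* S K_j*`, and cyclicity of the trace moves `K_j` to the other
side of `A`.
-/

open Matrix
open scoped ComplexOrder

/-- The real power `σ^s` of a positive definite matrix, via the functional calculus. -/
noncomputable def mpow {n : ℕ} {σ : Matrix (Fin n) (Fin n) ℂ} (hσ : σ.PosDef) (s : ℝ) :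
    Matrix (Fin n) (Fin n) ℂ :=
  hσ.1.cfc fun x => x ^ s

/-- The dual Kraus operators `K̂_j = σ^{1/2} K_j* σ^{−1/2}`. -/
noncomputable def dualKraus {n : ℕ} {σ : Matrix (Fin n) (Fin n) ℂ} (hσ : σ.PosDef)
    (Kj : Matrix (Fin n) (Fin n) ℂ) : Matrix (Fin n) (Fin n) ℂ :=
  mpow hσ (1 / 2) * Kjᴴ * mpow hσ (-(1 / 2))

section

variable {n : ℕ} {σ : Matrix (Fin n) (Fin n) ℂ} (hσ : σ.PosDef)

theorem mpow_eq_cfc (s : ℝ) : mpow hσ s = cfc (fun x : ℝ => x ^ s) σ :=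
  (hσ.1.cfc_eq _).symm

theorem mpow_mul_mpow (s t : ℝ) : mpow hσ s * mpow hσ t = mpow hσ (s + t) := by
  have hcont (r : ℝ) : ContinuousOn (fun x : ℝ => x ^ r) (spectrum ℝ σ) :=
    finite_real_spectrum.continuousOn _
  simp only [mpow_eq_cfc, ← cfc_mul _ _ σ (hcont s) (hcont t)]
  refine cfc_congr fun x hx => (Real.rpow_add ?_ s t).symm
  obtain ⟨i, rfl⟩ := hσ.1.spectrum_real_eq_range_eigenvalues ▸ hx
  exact hσ.eigenvalues_pos i

theorem conjTranspose_mpow (s : ℝ) : (mpow hσ s)ᴴ = mpow hσ s := by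
  rw [mpow_eq_cfc]
  exact IsSelfAdjoint.cfc

theorem mpow_one : mpow hσ 1 = σ := by
  simp [mpow_eq_cfc, cfc_id' ℝ σ hσ.1.isSelfAdjoint]

theorem mpow_zero : mpow hσ 0 = 1 := by
  simp [mpow_eq_cfc, cfc_const_one ℝ σ hσ.1.isSelfAdjoint]

theorem mpow_mul_mpow_neg (s : ℝ) : mpow hσ s * mpow hσ (-s) = 1 := by
  rw [mpow_mul_mpow, add_neg_cancel, mpow_zero]

theorem mpow_neg_mul_mpow (s : ℝ) : mpow hσ (-s) * mpow hσ s = 1 := by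
  rw [mpow_mul_mpow, neg_add_cancel, mpow_zero]

theorem mpow_mul_mpow_neg_mul (s : ℝ) (X : Matrix (Fin n) (Fin n) ℂ) :
    mpow hσ s * (mpow hσ (-s) * X) = X := by
  rw [← mul_assoc, mpow_mul_mpow_neg, one_mul]

theorem mpow_half_mul_mpow_half : mpow hσ (1 / 2) * mpow hσ (1 / 2) = σ := by
  rw [mpow_mul_mpow, add_halves, mpow_one]

theorem conjTranspose_dualKraus (Kj : Matrix (Fin n) (Fin n) ℂ) :
    (dualKraus hσ Kj)ᴴ = mpow hσ (-(1 / 2)) * Kj * mpow hσ (1 / 2) := by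
  simp only [dualKraus, conjTranspose_mul, conjTranspose_conjTranspose, conjTranspose_mpow,
    mul_assoc]

theorem mpow_neg_half_mul_mul_mpow_neg_half :
    mpow hσ (-(1 / 2)) * σ * mpow hσ (-(1 / 2)) = 1 := by
  calc _ = mpow hσ (-(1 / 2)) * mpow hσ 1 * mpow hσ (-(1 / 2)) := by rw [mpow_one]
    _ = 1 := by rw [mpow_mul_mpow, mpow_mul_mpow]; norm_num [mpow_zero]

theorem conjTranspose_dualKraus_mul_dualKraus (Kj : Matrix (Fin n) (Fin n) ℂ) :
    (dualKraus hσ Kj)ᴴ * dualKraus hσ Kj =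
      mpow hσ (-(1 / 2)) * (Kj * σ * Kjᴴ) * mpow hσ (-(1 / 2)) := by
  rw [conjTranspose_dualKraus, dualKraus]
  simp only [mul_assoc]
  rw [← mul_assoc (mpow hσ (1 / 2)), mpow_half_mul_mpow_half]

theorem dualKraus_mul_mul_conjTranspose_dualKraus (Kj : Matrix (Fin n) (Fin n) ℂ) :
    dualKraus hσ Kj * σ * (dualKraus hσ Kj)ᴴ =
      mpow hσ (1 / 2) * (Kjᴴ * Kj) * mpow hσ (1 / 2) := by
  calc _ = mpow hσ (1 / 2) * Kjᴴ * (mpow hσ (-(1 / 2)) * σ * mpow hσ (-(1 / 2))) * Kj *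
        mpow hσ (1 / 2) := by
        rw [conjTranspose_dualKraus, dualKraus]; simp only [mul_assoc]
    _ = _ := by rw [mpow_neg_half_mul_mul_mpow_neg_half, mul_one, mul_assoc _ Kjᴴ]

noncomputable def kmsInner (A B : Matrix (Fin n) (Fin n) ℂ) : ℂ :=
  (mpow hσ (1 / 2) * Aᴴ * (mpow hσ (1 / 2) * B)).trace

theorem kmsInner_sum_left {ι : Type*} (s : Finset ι) (A : ι → Matrix (Fin n) (Fin n) ℂ)
    (B : Matrix (Fin n) (Fin n) ℂ) :
    kmsInner hσ (∑ j ∈ s, A j) B = ∑ j ∈ s, kmsInner hσ (A j) B := by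
  simp only [kmsInner, conjTranspose_sum, Finset.mul_sum, Finset.sum_mul, trace_sum]

theorem kmsInner_sum_right {ι : Type*} (s : Finset ι) (A : Matrix (Fin n) (Fin n) ℂ)
    (B : ι → Matrix (Fin n) (Fin n) ℂ) :
    kmsInner hσ A (∑ j ∈ s, B j) = ∑ j ∈ s, kmsInner hσ A (B j) := by
  simp only [kmsInner, Finset.mul_sum, trace_sum]

theorem kmsInner_conj_dualKraus (Kj A B : Matrix (Fin n) (Fin n) ℂ) :
    kmsInner hσ ((dualKraus hσ Kj)ᴴ * B * dualKraus hσ Kj) A = kmsInner hσ B (Kjᴴ * A * Kj) := by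
  have hconj : mpow hσ (1 / 2) * ((dualKraus hσ Kj)ᴴ * B * dualKraus hσ Kj)ᴴ * mpow hσ (1 / 2) =
      Kj * (mpow hσ (1 / 2) * Bᴴ * mpow hσ (1 / 2)) * Kjᴴ := by
    simp only [conjTranspose_mul, conjTranspose_dualKraus, conjTranspose_mpow, mul_assoc]
    rw [mpow_mul_mpow_neg_mul, mpow_neg_mul_mpow, mul_one]
  calc kmsInner hσ ((dualKraus hσ Kj)ᴴ * B * dualKraus hσ Kj) A
      = (Kj * (mpow hσ (1 / 2) * Bᴴ * mpow hσ (1 / 2) * Kjᴴ * A)).trace := by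
        rw [kmsInner, ← mul_assoc, hconj]; simp only [mul_assoc]
    _ = kmsInner hσ B (Kjᴴ * A * Kj) := by
        rw [trace_mul_comm, kmsInner]; simp only [mul_assoc]

end

theorem dualKraus_properties_general {n m : ℕ}
    (σ : Matrix (Fin n) (Fin n) ℂ) (hσ : σ.PosDef)
    (K : Fin m → Matrix (Fin n) (Fin n) ℂ)
    (hunital : ∑ j, (K j)ᴴ * K j = 1)
    (hinv : ∑ j, K j * σ * (K j)ᴴ = σ) :
    (∑ j, (dualKraus hσ (K j))ᴴ * dualKraus hσ (K j) = 1) ∧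
    (∑ j, dualKraus hσ (K j) * σ * (dualKraus hσ (K j))ᴴ = σ) ∧
    (∀ A B : Matrix (Fin n) (Fin n) ℂ,
      (mpow hσ (1 / 2) * (∑ j, (dualKraus hσ (K j))ᴴ * B * dualKraus hσ (K j))ᴴ *
        (mpow hσ (1 / 2) * A)).trace
        = (mpow hσ (1 / 2) * Bᴴ *
            (mpow hσ (1 / 2) * ∑ j, (K j)ᴴ * A * K j)).trace) := by
  refine ⟨?_, ?_, fun A B => ?_⟩
  · simp only [conjTranspose_dualKraus_mul_dualKraus, ← Finset.sum_mul, ← Finset.mul_sum, hinv]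
    exact mpow_neg_half_mul_mul_mpow_neg_half hσ
  · simp only [dualKraus_mul_mul_conjTranspose_dualKraus, ← Finset.sum_mul, ← Finset.mul_sum,
      hunital, mul_one]
    exact mpow_half_mul_mpow_half hσ
  · change kmsInner hσ _ A = kmsInner hσ B _
    rw [kmsInner_sum_left, kmsInner_sum_right]
    exact Finset.sum_congr rfl fun j _ => kmsInner_conj_dualKraus hσ (K j) A B

/-- For a unital completely positive map `K(A) = Σ_j K_j* A K_j` with
`Σ_j K_j* K_j = I` and `Σ_j K_j σ K_j* = σ`, the dual Kraus operators
`K̂_j = σ^{1/2} K_j* σ^{−1/2}` satisfy (i) `Σ_j K̂_j* K̂_j = I`,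
(ii) `Σ_j K̂_j σ K̂_j* = σ`, and (iii) the map `K̂(A) = Σ_j K̂_j* A K̂_j` is the adjoint
of `K` with respect to the KMS inner product `⟨A,B⟩_{1/2} = Tr[σ^{1/2} A* σ^{1/2} B]`. -/
theorem dualKraus_properties {n m : ℕ}
    (σ : Matrix (Fin n) (Fin n) ℂ) (hσ : σ.PosDef) (hTr : σ.trace = 1)
    (K : Fin m → Matrix (Fin n) (Fin n) ℂ)
    (hunital : ∑ j, (K j)ᴴ * K j = 1)
    (hinv : ∑ j, K j * σ * (K j)ᴴ = σ) :
    (∑ j, (dualKraus hσ (K j))ᴴ * dualKraus hσ (K j) = 1) ∧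
    (∑ j, dualKraus hσ (K j) * σ * (dualKraus hσ (K j))ᴴ = σ) ∧
    (∀ A B : Matrix (Fin n) (Fin n) ℂ,
      (mpow hσ (1 / 2) * (∑ j, (dualKraus hσ (K j))ᴴ * B * dualKraus hσ (K j))ᴴ *
        (mpow hσ (1 / 2) * A)).trace
        = (mpow hσ (1 / 2) * Bᴴ *
            (mpow hσ (1 / 2) * ∑ j, (K j)ᴴ * A * K j)).trace) :=
  dualKraus_properties_general σ hσ K hunital hinv
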